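/- Let X ∼ μ ∈ 𝒫_{2+ε}(ℝ^d) for some ε > 0, and for (t,θ) ∈ ℝ × S^{d−1} set Z(t,θ) = 1{θᵀX ≤ t} − F_μ(t;θ), where F_μ(t;θ) = μ({x : θᵀx ≤ t}). Then: (a) ‖Z‖_{L¹(λ⊗σ)} ≤ ‖X‖ + 𝔼[‖X‖] almost surely, where λ is Lebesgue measure on ℝ and σ the uniform probability measure on S^{d−1}; and (b) ∫_{S^{d−1}} ∫_ℝ √(F_μ(t;θ)(1 − F_μ(t;θ))) dt dσ(θ) ≤ 2 + 4√K/ε, where K = sup_{θ ∈ S^{d−1}} 𝔼[|θᵀX|^{2+ε}]. -/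

import Mathlib

/-!
Write s = θᵀx₀ and F for the distribution function of θᵀX. For (a), 1{s ≤ t} − F(t) is the mean of
1{s ≤ t} − 1{θᵀX ≤ t}, so by Jensen and Tonelli its L¹(dt)-norm is at most
𝔼 ∫ |1{s ≤ t} − 1{θᵀX ≤ t}| dt = 𝔼|s − θᵀX| ≤ ‖x₀‖ + 𝔼‖X‖.
For (b), F(1 − F) ≤ min(F, 1 − F) ≤ Pr(|θᵀX| ≥ |t|) ≤ K / |t|^(2+ε) by Markov's inequality, so
√(F(1 − F)) is at most 1 on [−1, 1] and √K |t|^(−1−ε/2) outside, which integrate to 2 and 4√K/ε.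
Both bounds are uniform in θ, and σ has total mass at most 1 (it is the zero measure when d = 0).
-/

open MeasureTheory Metric

noncomputable section

variable {d : ℕ}

/-- The uniform probability distribution on the unit sphere of ℝ^d. -/
def unifSphere (d : ℕ) : Measure (sphere (0 : EuclideanSpace ℝ (Fin d)) 1) :=
  ((volume : Measure (EuclideanSpace ℝ (Fin d))).toSphere Set.univ)⁻¹ •
    (volume : Measure (EuclideanSpace ℝ (Fin d))).toSphere

/-- The distribution function of the projection θᵀX for X ∼ μ. -/
def Fproj (μ : Measure (EuclideanSpace ℝ (Fin d)))
    (t : ℝ) (θ : sphere (0 : EuclideanSpace ℝ (Fin d)) 1) : ℝ :=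
  (μ {x | (inner ℝ (θ : EuclideanSpace ℝ (Fin d)) x : ℝ) ≤ t}).toReal

open Set ProbabilityTheory
open scoped symmDiff

lemma integral_le_of_forall_le_of_measure_univ_le_one {α : Type*} [MeasurableSpace α]
    {ν : Measure α} (hν : ν univ ≤ 1) {f : α → ℝ} {C : ℝ} (hC : 0 ≤ C) (hf : ∀ a, f a ≤ C) :
    ∫ a, f a ∂ν ≤ C := by
  by_cases hfi : Integrable f ν
  · have : IsFiniteMeasure ν := ⟨hν.trans_lt ENNReal.one_lt_top⟩
    calc ∫ a, f a ∂ν ≤ ∫ _, C ∂ν := integral_mono hfi (integrable_const C) hf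
      _ = ν.real univ * C := by rw [integral_const, smul_eq_mul]
      _ ≤ 1 * C := by
        gcongr
        exact ENNReal.toReal_le_of_le_ofReal zero_le_one (by rwa [ENNReal.ofReal_one])
      _ = C := one_mul C
  · rwa [integral_undef hfi]

lemma unifSphere_univ_le_one : unifSphere d univ ≤ 1 := by
  rw [unifSphere, Measure.smul_apply, smul_eq_mul]
  exact ENNReal.inv_mul_le_one _

lemma volume_Ici_symmDiff_Ici (s y : ℝ) : volume (Ici s ∆ Ici y) = ‖s - y‖ₑ := by
  rw [measure_symmDiff_eq measurableSet_Ici.nullMeasurableSet measurableSet_Ici.nullMeasurableSet,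
    Ici_sdiff_Ici, Ici_sdiff_Ici, Real.volume_Ico, Real.volume_Ico, Real.enorm_eq_ofReal_abs]
  rcases le_total s y with h | h
  · rw [abs_of_nonpos (sub_nonpos.2 h), ENNReal.ofReal_of_nonpos (sub_nonpos.2 h), add_zero,
      neg_sub]
  · rw [abs_of_nonneg (sub_nonneg.2 h), ENNReal.ofReal_of_nonpos (sub_nonpos.2 h), zero_add]

lemma lintegral_enorm_indicator_Ici_sub_indicator_Ici (s y : ℝ) :
    ∫⁻ t, ‖(Ici s).indicator 1 t - (Ici y).indicator (1 : ℝ → ℝ) t‖ₑ = ‖s - y‖ₑ := by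
  simp_rw [← apply_indicator_symmDiff enorm_neg, enorm_indicator_eq_indicator_enorm, Pi.one_apply,
    enorm_one]
  rw [lintegral_indicator_const (measurableSet_Ici.symmDiff measurableSet_Ici), one_mul,
    volume_Ici_symmDiff_Ici]

lemma measureReal_le_abs_le_div_rpow {α : Type*} [MeasurableSpace α] (ν : Measure α)
    {Y : α → ℝ} {p a : ℝ} (hp : 0 < p) (ha : 0 < a) (hint : Integrable (fun x => |Y x| ^ p) ν) :
    ν.real {x | a ≤ |Y x|} ≤ (∫ x, |Y x| ^ p ∂ν) / a ^ p := by
  have hset : {x | a ≤ |Y x|} = {x | a ^ p ≤ |Y x| ^ p} := by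
    ext x
    exact (Real.rpow_le_rpow_iff ha.le (abs_nonneg _) hp).symm
  rw [le_div_iff₀ (Real.rpow_pos_of_pos ha p), mul_comm, hset]
  exact mul_meas_ge_le_integral_of_nonneg (ae_of_all _ fun x => by positivity) hint _

def powerTail (r : ℝ) : ℝ → ℝ := (Ioi 1).indicator fun t => t ^ (-(1 + r))

section PowerTail

variable {r : ℝ}

lemma powerTail_nonneg (r t : ℝ) : 0 ≤ powerTail r t :=
  indicator_nonneg (fun _ hu => Real.rpow_nonneg (zero_le_one.trans (le_of_lt hu)) _) t

lemma integrable_powerTail (hr : 0 < r) : Integrable (powerTail r) :=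
  (integrableOn_Ioi_rpow_of_lt (by linarith) one_pos).integrable_indicator measurableSet_Ioi

lemma integral_powerTail (hr : 0 < r) : ∫ t, powerTail r t = 1 / r := by
  rw [powerTail, integral_indicator measurableSet_Ioi,
    integral_Ioi_rpow_of_lt (by linarith) one_pos, Real.one_rpow,
    show -(1 + r) + 1 = -r by ring, neg_div_neg_eq]

lemma abs_rpow_le_powerTail_add_powerTail {t : ℝ} (ht : 1 < |t|) :
    |t| ^ (-(1 + r)) ≤ powerTail r t + powerTail r (-t) := by
  rcases lt_abs.1 ht with hpos | hneg
  · rw [abs_of_pos (one_pos.trans hpos), show powerTail r t = _ from indicator_of_mem hpos _]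
    exact le_add_of_nonneg_right (powerTail_nonneg r _)
  · rw [abs_of_neg (by linarith), show powerTail r (-t) = _ from indicator_of_mem hneg _]
    exact le_add_of_nonneg_left (powerTail_nonneg r _)

end PowerTail

section CDF

variable (ν : Measure ℝ) [IsProbabilityMeasure ν]

lemma cdf_eq_integral_indicator_Ici (t : ℝ) : cdf ν t = ∫ y, (Ici y).indicator 1 t ∂ν := by
  rw [cdf_eq_real, ← integral_indicator_one measurableSet_Iic]
  rfl

lemma indicator_Ici_sub_cdf_eq_integral (s t : ℝ) :
    (Ici s).indicator 1 t - cdf ν t = ∫ y, ((Ici s).indicator 1 t - (Ici y).indicator 1 t) ∂ν := by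
  have hint : Integrable (fun y => (Ici y).indicator (1 : ℝ → ℝ) t) ν :=
    (integrable_const (1 : ℝ)).indicator (measurableSet_Iic (a := t))
  rw [integral_sub (integrable_const _) hint, integral_const, probReal_univ, one_smul,
    cdf_eq_integral_indicator_Ici]

lemma lintegral_enorm_indicator_Ici_sub_cdf_le (s : ℝ) :
    ∫⁻ t, ‖(Ici s).indicator 1 t - cdf ν t‖ₑ ≤ ∫⁻ y, ‖s - y‖ₑ ∂ν := by
  set D : ℝ → ℝ → ℝ := fun t y => (Ici s).indicator 1 t - (Ici y).indicator 1 t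
  have hD : Measurable (Function.uncurry D) :=
    ((measurable_const.indicator measurableSet_Ici).comp measurable_fst).sub
      (measurable_const.indicator (measurableSet_le measurable_snd measurable_fst))
  calc ∫⁻ t, ‖(Ici s).indicator 1 t - cdf ν t‖ₑ = ∫⁻ t, ‖∫ y, D t y ∂ν‖ₑ := by
        simp_rw [indicator_Ici_sub_cdf_eq_integral ν s, D]
    _ ≤ ∫⁻ t, ∫⁻ y, ‖D t y‖ₑ ∂ν := lintegral_mono fun t => enorm_integral_le_lintegral_enorm _
    _ = ∫⁻ y, (∫⁻ t, ‖D t y‖ₑ) ∂ν := lintegral_lintegral_swap hD.enorm.aemeasurable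
    _ = ∫⁻ y, ‖s - y‖ₑ ∂ν := by simp_rw [D, lintegral_enorm_indicator_Ici_sub_indicator_Ici]

lemma integral_abs_indicator_Ici_sub_cdf_le (hν : Integrable id ν) (s : ℝ) :
    ∫ t, |(Ici s).indicator 1 t - cdf ν t| ≤ ∫ y, |s - y| ∂ν := by
  have hmeas : AEStronglyMeasurable (fun t => (Ici s).indicator 1 t - cdf ν t) :=
    ((measurable_const.indicator measurableSet_Ici).sub (monotone_cdf ν).measurable)
      |>.aestronglyMeasurable
  simp_rw [← Real.norm_eq_abs]
  rw [integral_norm_eq_lintegral_enorm hmeas,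
    integral_norm_eq_lintegral_enorm (f := fun y => s - y)
      (aestronglyMeasurable_const.sub aestronglyMeasurable_id)]
  exact ENNReal.toReal_mono ((integrable_const s).sub hν).hasFiniteIntegral.ne
    (lintegral_enorm_indicator_Ici_sub_cdf_le ν s)

lemma cdf_mul_one_sub_cdf_le_measureReal (t : ℝ) :
    cdf ν t * (1 - cdf ν t) ≤ ν.real {y | |t| ≤ |y|} := by
  have h0 := cdf_nonneg ν t
  have h1 := cdf_le_one ν t
  rcases le_total 0 t with ht | ht
  · calc cdf ν t * (1 - cdf ν t) ≤ 1 - cdf ν t := by nlinarith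
      _ = ν.real (Iic t)ᶜ := by rw [probReal_compl_eq_one_sub measurableSet_Iic, cdf_eq_real]
      _ ≤ ν.real {y | |t| ≤ |y|} := by
        refine measureReal_mono (fun y hy => ?_)
        simp only [compl_Iic, mem_Ioi] at hy
        show |t| ≤ |y|
        rw [abs_of_nonneg ht]
        exact hy.le.trans (le_abs_self y)
  · calc cdf ν t * (1 - cdf ν t) ≤ cdf ν t := by nlinarith
      _ = ν.real (Iic t) := cdf_eq_real ν t
      _ ≤ ν.real {y | |t| ≤ |y|} := by
        refine measureReal_mono (fun y hy => ?_)
        simp only [mem_Iic] at hy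
        show |t| ≤ |y|
        rw [abs_of_nonpos ht]
        exact (neg_le_neg hy).trans (neg_le_abs y)

lemma sqrt_cdf_mul_one_sub_cdf_le {p K t : ℝ} (hp : 0 < p) (ht : t ≠ 0)
    (hint : Integrable (fun y => |y| ^ p) ν) (hK : ∫ y, |y| ^ p ∂ν ≤ K) :
    √(cdf ν t * (1 - cdf ν t)) ≤ √K * |t| ^ (-(p / 2)) := by
  have hbound : cdf ν t * (1 - cdf ν t) ≤ K * |t| ^ (-p) := by
    calc cdf ν t * (1 - cdf ν t) ≤ ν.real {y | |t| ≤ |y|} := cdf_mul_one_sub_cdf_le_measureReal ν t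
      _ ≤ (∫ y, |y| ^ p ∂ν) / |t| ^ p :=
        measureReal_le_abs_le_div_rpow ν (Y := id) hp (abs_pos.2 ht) hint
      _ ≤ K / |t| ^ p := by gcongr
      _ = K * |t| ^ (-p) := by rw [Real.rpow_neg (abs_nonneg t), div_eq_mul_inv]
  calc √(cdf ν t * (1 - cdf ν t)) ≤ √(K * |t| ^ (-p)) := Real.sqrt_le_sqrt hbound
    _ = √K * |t| ^ (-(p / 2)) := by
      rw [Real.sqrt_mul' _ (by positivity), Real.sqrt_eq_rpow (|t| ^ _),
        ← Real.rpow_mul (abs_nonneg t)]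
      ring_nf

lemma sqrt_cdf_mul_one_sub_cdf_le_majorant {ε K : ℝ} (hε : 0 < ε)
    (hint : Integrable (fun y => |y| ^ (2 + ε)) ν) (hK : ∫ y, |y| ^ (2 + ε) ∂ν ≤ K) (t : ℝ) :
    √(cdf ν t * (1 - cdf ν t)) ≤
      (Icc (-1) 1).indicator 1 t + √K * (powerTail (ε / 2) t + powerTail (ε / 2) (-t)) := by
  have hbox_nonneg : 0 ≤ (Icc (-1 : ℝ) 1).indicator (1 : ℝ → ℝ) t :=
    indicator_nonneg (fun _ _ => zero_le_one) t
  have htails_nonneg : 0 ≤ √K * (powerTail (ε / 2) t + powerTail (ε / 2) (-t)) :=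
    mul_nonneg (Real.sqrt_nonneg K) (add_nonneg (powerTail_nonneg _ _) (powerTail_nonneg _ _))
  rcases le_or_gt |t| 1 with hsmall | hlarge
  · have hle_one : √(cdf ν t * (1 - cdf ν t)) ≤ 1 :=
      Real.sqrt_le_one.mpr (by nlinarith [cdf_nonneg ν t, cdf_le_one ν t])
    have hbox : (Icc (-1 : ℝ) 1).indicator (1 : ℝ → ℝ) t = 1 :=
      indicator_of_mem (mem_Icc.2 (abs_le.1 hsmall)) _
    linarith
  · calc √(cdf ν t * (1 - cdf ν t)) ≤ √K * |t| ^ (-((2 + ε) / 2)) :=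
          sqrt_cdf_mul_one_sub_cdf_le ν (by positivity) (abs_pos.1 (one_pos.trans hlarge)) hint hK
      _ = √K * |t| ^ (-(1 + ε / 2)) := by ring_nf
      _ ≤ √K * (powerTail (ε / 2) t + powerTail (ε / 2) (-t)) := by
          gcongr; exact abs_rpow_le_powerTail_add_powerTail hlarge
      _ ≤ _ := le_add_of_nonneg_left hbox_nonneg

lemma integral_sqrt_cdf_mul_one_sub_cdf_le {ε K : ℝ} (hε : 0 < ε)
    (hint : Integrable (fun y => |y| ^ (2 + ε)) ν) (hK : ∫ y, |y| ^ (2 + ε) ∂ν ≤ K) :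
    ∫ t, √(cdf ν t * (1 - cdf ν t)) ≤ 2 + 4 * √K / ε := by
  have hbox : Integrable ((Icc (-1 : ℝ) 1).indicator 1) :=
    (integrableOn_const (C := (1 : ℝ)) measure_Icc_lt_top.ne).integrable_indicator
      measurableSet_Icc
  have htail := integrable_powerTail (half_pos hε)
  have htails : Integrable fun t => powerTail (ε / 2) t + powerTail (ε / 2) (-t) :=
    htail.add htail.comp_neg
  calc ∫ t, √(cdf ν t * (1 - cdf ν t))
      ≤ ∫ t, ((Icc (-1) 1).indicator 1 t + √K * (powerTail (ε / 2) t + powerTail (ε / 2) (-t))) :=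
        integral_mono_of_nonneg (ae_of_all _ fun t => Real.sqrt_nonneg _)
          (hbox.add (htails.const_mul _))
          (ae_of_all _ (sqrt_cdf_mul_one_sub_cdf_le_majorant ν hε hint hK))
    _ = 2 + 4 * √K / ε := by
        rw [integral_add hbox (htails.const_mul _), integral_const_mul,
          integral_add htail htail.comp_neg, integral_neg_eq_self (powerTail (ε / 2)),
          integral_powerTail (half_pos hε), integral_indicator_one measurableSet_Icc,
          Real.volume_real_Icc]
        norm_num
        ring

end CDF

section Projection

variable {E : Type*} [NormedAddCommGroup E] [InnerProductSpace ℝ E]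

lemma abs_inner_le_norm_of_mem_sphere (θ : sphere (0 : E) 1) (x : E) :
    |inner ℝ (θ : E) x| ≤ ‖x‖ := by
  simpa [norm_eq_of_mem_sphere θ] using abs_real_inner_le_norm (θ : E) x

lemma memLp_map_inner [MeasurableSpace E] [BorelSpace E] {μ : Measure E} {p : ENNReal}
    (hμ : MemLp id p μ) (θ : sphere (0 : E) 1) :
    MemLp id p (μ.map fun x => inner ℝ (θ : E) x) := by
  have hθ : Continuous fun x : E => inner ℝ (θ : E) x := continuous_const.inner continuous_id
  refine (memLp_map_measure_iff aestronglyMeasurable_id hθ.aemeasurable).2 ?_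
  exact hμ.of_le hθ.aestronglyMeasurable
    (ae_of_all _ fun x => by simpa using abs_inner_le_norm_of_mem_sphere θ x)

end Projection

local notation "ℝᵈ" => EuclideanSpace ℝ (Fin d)

lemma Fproj_eq_cdf_map (μ : Measure ℝᵈ) [IsProbabilityMeasure μ] (t : ℝ) (θ : sphere (0 : ℝᵈ) 1) :
    Fproj μ t θ = cdf (μ.map fun x => inner ℝ (θ : ℝᵈ) x) t := by
  have hθ : Measurable fun x : ℝᵈ => inner ℝ (θ : ℝᵈ) x :=
    (continuous_const.inner continuous_id).measurable
  have := Measure.isProbabilityMeasure_map (μ := μ) hθ.aemeasurable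
  rw [cdf_eq_real, map_measureReal_apply hθ measurableSet_Iic]
  rfl

lemma integral_abs_indicator_sub_Fproj_le (μ : Measure ℝᵈ) [IsProbabilityMeasure μ]
    (hμ : Integrable id μ) (x₀ : ℝᵈ) (θ : sphere (0 : ℝᵈ) 1) :
    ∫ t, |(if inner ℝ (θ : ℝᵈ) x₀ ≤ t then (1 : ℝ) else 0) - Fproj μ t θ| ≤
      ‖x₀‖ + ∫ x, ‖x‖ ∂μ := by
  set Y : ℝᵈ → ℝ := fun x => inner ℝ (θ : ℝᵈ) x
  have hY : Continuous Y := continuous_const.inner continuous_id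
  have := Measure.isProbabilityMeasure_map (μ := μ) hY.aemeasurable
  have hnorm : Integrable (fun x => ‖x‖) μ := hμ.norm
  have hν : Integrable id (μ.map Y) :=
    memLp_one_iff_integrable.1 (memLp_map_inner (memLp_one_iff_integrable.2 hμ) θ)
  calc ∫ t : ℝ, |(if Y x₀ ≤ t then (1 : ℝ) else 0) - Fproj μ t θ|
      = ∫ t, |(Ici (Y x₀)).indicator 1 t - cdf (μ.map Y) t| := by
        simp_rw [Fproj_eq_cdf_map, indicator_apply, mem_Ici, Pi.one_apply]; rfl
    _ ≤ ∫ y, |Y x₀ - y| ∂(μ.map Y) := integral_abs_indicator_Ici_sub_cdf_le _ hν _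
    _ = ∫ x, |Y x₀ - Y x| ∂μ := integral_map hY.aemeasurable (by fun_prop)
    _ ≤ ∫ x, (‖x₀‖ + ‖x‖) ∂μ :=
        integral_mono_of_nonneg (ae_of_all _ fun _ => abs_nonneg _)
          ((integrable_const _).add hnorm) (ae_of_all _ fun x => (abs_sub _ _).trans
            (add_le_add (abs_inner_le_norm_of_mem_sphere θ x₀)
              (abs_inner_le_norm_of_mem_sphere θ x)))
    _ = ‖x₀‖ + ∫ x, ‖x‖ ∂μ := by
        rw [integral_add (integrable_const _) hnorm, integral_const, probReal_univ, one_smul]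

lemma integral_sqrt_Fproj_mul_one_sub_le {ε K : ℝ} (hε : 0 < ε) (μ : Measure ℝᵈ)
    [IsProbabilityMeasure μ] (hμ : MemLp id (ENNReal.ofReal (2 + ε)) μ) (θ : sphere (0 : ℝᵈ) 1)
    (hK : ∫ x, |inner ℝ (θ : ℝᵈ) x| ^ (2 + ε) ∂μ ≤ K) :
    ∫ t, √(Fproj μ t θ * (1 - Fproj μ t θ)) ≤ 2 + 4 * √K / ε := by
  set Y : ℝᵈ → ℝ := fun x => inner ℝ (θ : ℝᵈ) x
  have hY : Continuous Y := continuous_const.inner continuous_id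
  have := Measure.isProbabilityMeasure_map (μ := μ) hY.aemeasurable
  have hν : Integrable (fun y => |y| ^ (2 + ε)) (μ.map Y) := by
    have := (memLp_map_inner hμ θ).integrable_norm_rpow
      (ENNReal.ofReal_pos.2 (by linarith)).ne' ENNReal.ofReal_ne_top
    simpa [ENNReal.toReal_ofReal (by linarith : 0 ≤ 2 + ε)] using this
  simp_rw [Fproj_eq_cdf_map]
  refine integral_sqrt_cdf_mul_one_sub_cdf_le _ hε hν ?_
  rwa [integral_map hY.aemeasurable (continuous_abs.measurable.pow_const _).aestronglyMeasurable]

theorem stmt17_general (ε : ℝ) (hε : 0 < ε)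
    (μ : Measure (EuclideanSpace ℝ (Fin d))) [IsProbabilityMeasure μ]
    (hmom : Integrable (fun x => ‖x‖ ^ (2 + ε)) μ)
    (K : ℝ)
    (hK : ∀ θ : sphere (0 : EuclideanSpace ℝ (Fin d)) 1,
      ∫ x, |(inner ℝ (θ : EuclideanSpace ℝ (Fin d)) x : ℝ)| ^ (2 + ε) ∂μ ≤ K) :
    (∀ x₀ : EuclideanSpace ℝ (Fin d),
      ∫ θ : sphere (0 : EuclideanSpace ℝ (Fin d)) 1,
        (∫ t : ℝ, |(if (inner ℝ (θ : EuclideanSpace ℝ (Fin d)) x₀ : ℝ) ≤ t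
            then (1 : ℝ) else 0) - Fproj μ t θ|) ∂(unifSphere d)
        ≤ ‖x₀‖ + ∫ x, ‖x‖ ∂μ) ∧
    ∫ θ : sphere (0 : EuclideanSpace ℝ (Fin d)) 1,
        (∫ t : ℝ, Real.sqrt (Fproj μ t θ * (1 - Fproj μ t θ))) ∂(unifSphere d)
      ≤ 2 + 4 * Real.sqrt K / ε := by
  have hp : ENNReal.ofReal (2 + ε) ≠ 0 := (ENNReal.ofReal_pos.2 (by linarith)).ne'
  have hmemLp : MemLp id (ENNReal.ofReal (2 + ε)) μ := by
    rw [← integrable_norm_rpow_iff aestronglyMeasurable_id hp ENNReal.ofReal_ne_top,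
      ENNReal.toReal_ofReal (by linarith)]
    exact hmom
  have hint : Integrable id μ := hmemLp.integrable (ENNReal.one_le_ofReal.2 (by linarith))
  refine ⟨fun x₀ => ?_, ?_⟩
  · exact integral_le_of_forall_le_of_measure_univ_le_one unifSphere_univ_le_one (by positivity)
      (integral_abs_indicator_sub_Fproj_le μ hint x₀)
  · exact integral_le_of_forall_le_of_measure_univ_le_one unifSphere_univ_le_one (by positivity)
      fun θ => integral_sqrt_Fproj_mul_one_sub_le hε μ hmemLp θ (hK θ)

/-- For X ∼ μ ∈ 𝒫_{2+ε}(ℝ^d) and Z(t,θ) = 1{θᵀX ≤ t} − F_μ(t;θ):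
(a) ‖Z‖_{L¹(λ⊗σ)} ≤ ‖X‖ + 𝔼‖X‖ pointwise in X; and
(b) ∫∫ √(F_μ(1−F_μ)) dt dσ ≤ 2 + 4√K/ε where K bounds sup_θ 𝔼|θᵀX|^{2+ε}. -/
theorem stmt17 (ε : ℝ) (hε : 0 < ε)
    (μ : Measure (EuclideanSpace ℝ (Fin d))) [IsProbabilityMeasure μ]
    (hmom : Integrable (fun x => ‖x‖ ^ (2 + ε)) μ)
    (K : ℝ) (hK0 : 0 ≤ K)
    (hK : ∀ θ : sphere (0 : EuclideanSpace ℝ (Fin d)) 1,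
      ∫ x, |(inner ℝ (θ : EuclideanSpace ℝ (Fin d)) x : ℝ)| ^ (2 + ε) ∂μ ≤ K) :
    (∀ x₀ : EuclideanSpace ℝ (Fin d),
      ∫ θ : sphere (0 : EuclideanSpace ℝ (Fin d)) 1,
        (∫ t : ℝ, |(if (inner ℝ (θ : EuclideanSpace ℝ (Fin d)) x₀ : ℝ) ≤ t
            then (1 : ℝ) else 0) - Fproj μ t θ|) ∂(unifSphere d)
        ≤ ‖x₀‖ + ∫ x, ‖x‖ ∂μ) ∧
    ∫ θ : sphere (0 : EuclideanSpace ℝ (Fin d)) 1,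
        (∫ t : ℝ, Real.sqrt (Fproj μ t θ * (1 - Fproj μ t θ))) ∂(unifSphere d)
      ≤ 2 + 4 * Real.sqrt K / ε :=
  stmt17_general ε hε μ hmom K hK
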